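/- arXiv:2003.06193 — 6 statements merged into one kernel-verified Lean document; each statement's English description precedes it below -/
import Mathlib

section
/- Let F(t) and G(t) be univariate real polynomials, and define f(x,y) = x·F(xy) and g(x,y) = y·G(xy). Then the Jacobian determinant Jac(f,g) = f_x·g_y − f_y·g_x equals H'(xy), where H(t) = t·F(t)·G(t). -/
open MvPolynomial

noncomputable def Jac (f g : MvPolynomial (Fin 2) ℝ) : MvPolynomial (Fin 2) ℝ :=
  pderiv 0 f * pderiv 1 g - pderiv 1 f * pderiv 0 g

theorem jac_of_product_form (F G : Polynomial ℝ)
    (f g : MvPolynomial (Fin 2) ℝ)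
    (hf : f = X 0 * Polynomial.aeval (X 0 * X 1 : MvPolynomial (Fin 2) ℝ) F)
    (hg : g = X 1 * Polynomial.aeval (X 0 * X 1 : MvPolynomial (Fin 2) ℝ) G) :
    Jac f g =
      Polynomial.aeval (X 0 * X 1 : MvPolynomial (Fin 2) ℝ)
        (Polynomial.derivative (Polynomial.X * F * G)) := by
  subst hf hg
  simp only [Jac, Derivation.leibniz, Derivation.map_aeval, Polynomial.derivative_mul,
    Polynomial.derivative_X, map_add, map_mul, Polynomial.aeval_X, pderiv_X_self,
    pderiv_X_of_ne (show (1:Fin 2) ≠ 0 by decide),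
    pderiv_X_of_ne (show (0:Fin 2) ≠ 1 by decide), smul_eq_mul, map_one]
  ring
end

section
/- Let F(t) and G(t) be univariate real polynomials, f(x,y) = x·F(xy), g(x,y) = y·G(xy). If the polynomial F(t)·G(t) has a nonzero real root, then the Jacobian determinant Jac(f,g) attains both positive and negative values on ℝ². -/
/-!
Writing `u = xy`, one computes `Jac f g = R'(xy)` for `R(t) = t F(t) G(t)`. The polynomial `R`
vanishes at `0` and at the nonzero root of `F G`, and is nonconstant, so `R` is neither monotone
nor antitone and `R'` takes both signs; evaluating at `(t, 1)` transfers this to the Jacobian.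
-/

open MvPolynomial

namespace Polynomial

theorem exists_derivative_eval_pos_of_eval_eq {R : ℝ[X]} (hR : 0 < R.natDegree) {a b : ℝ}
    (hab : a ≠ b) (hRab : R.eval a = R.eval b) : ∃ t, 0 < R.derivative.eval t := by
  wlog hlt : a < b generalizing a b
  · exact this hab.symm hRab.symm (hab.symm.lt_of_le (not_lt.mp hlt))
  by_contra! hnonpos
  have hanti : Antitone fun t => R.eval t :=
    antitone_of_deriv_nonpos R.differentiable fun t => by rw [Polynomial.deriv]; exact hnonpos t
  have hconst : R = C (R.eval a) := by
    refine eq_of_infinite_eval_eq _ _ ((Set.Icc_infinite hlt).mono fun t ht => ?_)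
    have hle := hanti ht.1
    have hge := hanti ht.2
    simp only [Set.mem_ofPred_eq, eval_C] at hle hge ⊢
    linarith
  rw [hconst, natDegree_C] at hR
  exact hR.false

theorem exists_derivative_eval_pos_and_neg_of_eval_eq {R : ℝ[X]} (hR : 0 < R.natDegree)
    {a b : ℝ} (hab : a ≠ b) (hRab : R.eval a = R.eval b) :
    (∃ t, 0 < R.derivative.eval t) ∧ ∃ t, R.derivative.eval t < 0 := by
  refine ⟨exists_derivative_eval_pos_of_eval_eq hR hab hRab, ?_⟩
  obtain ⟨t, ht⟩ := exists_derivative_eval_pos_of_eval_eq (R := -R)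
    (by rwa [natDegree_neg]) hab (by simp only [eval_neg, hRab])
  exact ⟨t, by simpa using ht⟩

end Polynomial

theorem MvPolynomial.eval_polynomial_aeval {σ R : Type*} [CommRing R] (p : σ → R)
    (u : MvPolynomial σ R) (P : Polynomial R) :
    eval p (Polynomial.aeval u P) = P.eval (eval p u) := by
  simpa [coe_aeval_eq_eval] using (Polynomial.aeval_algHom_apply (aeval p) u P).symm

theorem jac_X_mul_aeval_X_mul (F G : Polynomial ℝ) :
    Jac (X 0 * Polynomial.aeval (X 0 * X 1) F) (X 1 * Polynomial.aeval (X 0 * X 1) G) =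
      Polynomial.aeval (X 0 * X 1) (Polynomial.derivative (Polynomial.X * (F * G))) := by
  have chain (i : Fin 2) (P : Polynomial ℝ) :
      pderiv i (Polynomial.aeval (X 0 * X 1 : MvPolynomial (Fin 2) ℝ) P) =
        Polynomial.aeval (X 0 * X 1) (Polynomial.derivative P) * pderiv i (X 0 * X 1) :=
    (pderiv i).comp_aeval_eq _ P
  simp only [Jac, Derivation.leibniz, chain, pderiv_X_self, pderiv_X_of_ne, ne_eq,
    Fin.zero_eq_one_iff, Fin.one_eq_zero_iff, OfNat.ofNat_ne_one, not_false_eq_true,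
    smul_eq_mul, Polynomial.derivative_mul, Polynomial.derivative_X, map_add, map_mul, map_one,
    Polynomial.aeval_X]
  ring

theorem jac_changes_sign_of_root (F G : Polynomial ℝ)
    (f g : MvPolynomial (Fin 2) ℝ)
    (hf : f = X 0 * Polynomial.aeval (X 0 * X 1 : MvPolynomial (Fin 2) ℝ) F)
    (hg : g = X 1 * Polynomial.aeval (X 0 * X 1 : MvPolynomial (Fin 2) ℝ) G)
    (hFG : F * G ≠ 0)
    (hroot : ∃ t : ℝ, t ≠ 0 ∧ (F * G).eval t = 0) :
    (∃ p : Fin 2 → ℝ, 0 < eval p (Jac f g)) ∧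
    (∃ q : Fin 2 → ℝ, eval q (Jac f g) < 0) := by
  obtain ⟨t₀, ht₀, hroot⟩ := hroot
  set R : Polynomial ℝ := Polynomial.X * (F * G)
  have hR : 0 < R.natDegree := by
    rw [Polynomial.natDegree_mul Polynomial.X_ne_zero hFG, Polynomial.natDegree_X]
    omega
  have heval (t : ℝ) : eval ![t, 1] (Jac f g) = R.derivative.eval t := by
    rw [hf, hg, jac_X_mul_aeval_X_mul, eval_polynomial_aeval]
    simp [R]
  obtain ⟨⟨tp, htp⟩, ⟨tn, htn⟩⟩ :=
    Polynomial.exists_derivative_eval_pos_and_neg_of_eval_eq hR ht₀.symm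
      (by simp [R, hroot])
  exact ⟨⟨![tp, 1], heval tp ▸ htp⟩, ⟨![tn, 1], heval tn ▸ htn⟩⟩
end

section
/- Let f, g ∈ ℝ[x,y] and ξ a nonzero vector in ℝ². If f^ξ and g^ξ are the symbolic restrictions of f and g to the faces of their Newton polygons in direction ξ, and Jac(f^ξ, g^ξ) ≠ 0, then the symbolic restriction of Jac(f,g) in direction ξ equals Jac(f^ξ, g^ξ). -/
open MvPolynomial

open Classical in
/-- The symbolic restriction of `h` to the face of its Newton polygon in direction `ξ`. -/
noncomputable def face (ξ : ℝ × ℝ) (h : MvPolynomial (Fin 2) ℝ) : MvPolynomial (Fin 2) ℝ :=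
  ∑ m ∈ h.support.filter (fun m => ∀ m' ∈ h.support,
      ξ.1 * (m' 0 : ℝ) + ξ.2 * (m' 1 : ℝ) ≤ ξ.1 * (m 0 : ℝ) + ξ.2 * (m 1 : ℝ)),
    monomial m (h.coeff m)

/-!
Write `w` for the weight `d ↦ ξ₁ d₀ + ξ₂ d₁` of a monomial and split `f = F + f'`, `g = G + g'`,
where `F = f^ξ` and `G = g^ξ` are `w`-homogeneous of the top weights `a` and `b` of `f` and `g`,
and `f'`, `g'` only have monomials of smaller weight. Each `∂ᵢ` lowers weights by `ξᵢ`, so in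
`Jac f g = Jac F G + Jac F g' + Jac f' g` the first term is homogeneous of weight
`a + b - ξ₁ - ξ₂` and the other two only have monomials of strictly smaller weight. Hence a
nonzero `Jac F G` is the top-weight part of `Jac f g`.
-/

open Finsupp (weight single)

namespace MvPolynomial

variable {σ R M : Type*} {w : σ → M} {a b : M}

section CommSemiring

variable [CommSemiring R] {p q : MvPolynomial σ R}

theorem add_single_mem_support_of_mem_support_pderiv {i : σ} {d : σ →₀ ℕ}
    (hd : d ∈ (pderiv i p).support) : d + single i 1 ∈ p.support := by
  rw [mem_support_iff, coeff_pderiv] at hd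
  exact mem_support_iff.mpr (left_ne_zero_of_mul hd)

theorem IsWeightedHomogeneous.weight_le [AddCommMonoid M] [Preorder M]
    (hp : p.IsWeightedHomogeneous w a) : ∀ d ∈ p.support, weight w d ≤ a :=
  fun _ hd => (hp (mem_support_iff.mp hd)).le

variable [AddCommGroup M] [LinearOrder M] [IsOrderedAddMonoid M]

theorem weight_le_of_mem_support_pderiv (hp : ∀ d ∈ p.support, weight w d ≤ a) (i : σ) :
    ∀ d ∈ (pderiv i p).support, weight w d ≤ a - w i := by
  intro d hd
  have := hp _ (add_single_mem_support_of_mem_support_pderiv hd)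
  rw [map_add, Finsupp.weight_single, one_smul] at this
  exact le_sub_iff_add_le.mpr this

theorem weight_lt_of_mem_support_pderiv (hp : ∀ d ∈ p.support, weight w d < a) (i : σ) :
    ∀ d ∈ (pderiv i p).support, weight w d < a - w i := by
  intro d hd
  have := hp _ (add_single_mem_support_of_mem_support_pderiv hd)
  rw [map_add, Finsupp.weight_single, one_smul] at this
  exact lt_sub_iff_add_lt.mpr this

theorem weight_lt_of_mem_support_mul (hp : ∀ d ∈ p.support, weight w d ≤ a)
    (hq : ∀ d ∈ q.support, weight w d < b) :
    ∀ d ∈ (p * q).support, weight w d < a + b := by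
  classical
  intro d hd
  obtain ⟨u, hu, v, hv, rfl⟩ := Finset.mem_add.mp (support_mul p q hd)
  rw [map_add]
  exact add_lt_add_of_le_of_lt (hp u hu) (hq v hv)

end CommSemiring

section CommRing

variable [CommRing R] [AddCommMonoid M] [PartialOrder M] {p q : MvPolynomial σ R}

theorem weight_lt_of_mem_support_sub_weightedHomogeneousComponent
    (hp : ∀ d ∈ p.support, weight w d ≤ a) :
    ∀ d ∈ (p - weightedHomogeneousComponent w a p).support, weight w d < a := by
  classical
  intro d hd
  rw [mem_support_iff, coeff_sub, coeff_weightedHomogeneousComponent] at hd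
  split_ifs at hd with hda
  · exact absurd (sub_self _) hd
  · exact (hp d (mem_support_iff.mpr (by simpa using hd))).lt_of_ne hda

theorem weightedHomogeneousComponent_add_eq_of_weight_lt
    (hp : p.IsWeightedHomogeneous w a) (hq : ∀ d ∈ q.support, weight w d < a) :
    weightedHomogeneousComponent w a (p + q) = p := by
  rw [map_add, hp.weightedHomogeneousComponent_same,
    weightedHomogeneousComponent_eq_zero' _ _ fun d hd => (hq d hd).ne, add_zero]

end CommRing

end MvPolynomial

section Jacobian

variable {M : Type*} [AddCommGroup M] {w : Fin 2 → M} {a b : M} {p q : MvPolynomial (Fin 2) ℝ}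

theorem jac_zero_left (q : MvPolynomial (Fin 2) ℝ) : Jac 0 q = 0 := by
  simp [Jac]

theorem jac_zero_right (p : MvPolynomial (Fin 2) ℝ) : Jac p 0 = 0 := by
  simp [Jac]

theorem jac_swap (p q : MvPolynomial (Fin 2) ℝ) : Jac q p = -Jac p q := by
  simp only [Jac]
  ring

theorem MvPolynomial.IsWeightedHomogeneous.jac (hp : p.IsWeightedHomogeneous w a)
    (hq : q.IsWeightedHomogeneous w b) :
    (Jac p q).IsWeightedHomogeneous w (a + b - w 0 - w 1) := by
  have h₀₁ := (hp.pderiv (sub_add_cancel a (w 0))).mul (hq.pderiv (sub_add_cancel b (w 1)))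
  have h₁₀ := (hp.pderiv (sub_add_cancel a (w 1))).mul (hq.pderiv (sub_add_cancel b (w 0)))
  rw [show a - w 0 + (b - w 1) = a + b - w 0 - w 1 by abel] at h₀₁
  rw [show a - w 1 + (b - w 0) = a + b - w 0 - w 1 by abel] at h₁₀
  exact h₀₁.sub h₁₀

variable [LinearOrder M] [IsOrderedAddMonoid M]

theorem weight_lt_of_mem_support_jac (hp : ∀ d ∈ p.support, weight w d ≤ a)
    (hq : ∀ d ∈ q.support, weight w d < b) :
    ∀ d ∈ (Jac p q).support, weight w d < a + b - w 0 - w 1 := by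
  intro d hd
  rcases Finset.mem_union.mp (support_sub _ _ _ hd) with h | h
  · exact (weight_lt_of_mem_support_mul (weight_le_of_mem_support_pderiv hp 0)
      (weight_lt_of_mem_support_pderiv hq 1) d h).trans_eq (by abel)
  · exact (weight_lt_of_mem_support_mul (weight_le_of_mem_support_pderiv hp 1)
      (weight_lt_of_mem_support_pderiv hq 0) d h).trans_eq (by abel)

end Jacobian

section Face

def faceWeight (ξ : ℝ × ℝ) : Fin 2 → ℝ := ![ξ.1, ξ.2]

variable {ξ : ℝ × ℝ} {a : ℝ} {h p q : MvPolynomial (Fin 2) ℝ}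

theorem weight_faceWeight (ξ : ℝ × ℝ) (d : Fin 2 →₀ ℕ) :
    weight (faceWeight ξ) d = ξ.1 * (d 0 : ℝ) + ξ.2 * (d 1 : ℝ) := by
  simp [Finsupp.weight_eq_sum, Fin.sum_univ_two, faceWeight, mul_comm]

theorem face_zero (ξ : ℝ × ℝ) : face ξ 0 = 0 := by
  simp [face]

theorem face_eq_weightedHomogeneousComponent {d₀ : Fin 2 →₀ ℕ} (hd₀ : d₀ ∈ h.support)
    (hmax : ∀ d ∈ h.support, weight (faceWeight ξ) d ≤ weight (faceWeight ξ) d₀) :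
    face ξ h = weightedHomogeneousComponent (faceWeight ξ) (weight (faceWeight ξ) d₀) h := by
  classical
  rw [face, weightedHomogeneousComponent_apply]
  refine Finset.sum_congr (Finset.filter_congr fun d hd => ?_) fun _ _ => rfl
  simp only [← weight_faceWeight]
  exact ⟨fun hd_max => le_antisymm (hmax d hd) (hd_max d₀ hd₀),
    fun hd_eq d' hd' => hd_eq ▸ hmax d' hd'⟩

theorem exists_face_eq_weightedHomogeneousComponent (ξ : ℝ × ℝ) (hh : h ≠ 0) :
    ∃ a, (∀ d ∈ h.support, weight (faceWeight ξ) d ≤ a) ∧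
      face ξ h = weightedHomogeneousComponent (faceWeight ξ) a h := by
  obtain ⟨d₀, hd₀, hmax⟩ :=
    Finset.exists_max_image h.support (weight (faceWeight ξ)) (support_nonempty.mpr hh)
  exact ⟨_, hmax, face_eq_weightedHomogeneousComponent hd₀ hmax⟩

theorem face_add_eq_of_weight_lt (hp : p.IsWeightedHomogeneous (faceWeight ξ) a) (hp₀ : p ≠ 0)
    (hq : ∀ d ∈ q.support, weight (faceWeight ξ) d < a) :
    face ξ (p + q) = p := by
  obtain ⟨d₀, hd₀⟩ := exists_coeff_ne_zero hp₀
  have hwd₀ : weight (faceWeight ξ) d₀ = a := hp hd₀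
  have hqd₀ : coeff d₀ q = 0 := notMem_support_iff.mp fun h => (hq d₀ h).ne hwd₀
  have hmem : d₀ ∈ (p + q).support := by
    rwa [mem_support_iff, coeff_add, hqd₀, add_zero]
  have hmax : ∀ d ∈ (p + q).support, weight (faceWeight ξ) d ≤ weight (faceWeight ξ) d₀ := by
    intro d hd
    rw [hwd₀]
    rcases Finset.mem_union.mp (support_add hd) with h | h
    · exact hp.weight_le d h
    · exact (hq d h).le
  rw [face_eq_weightedHomogeneousComponent hmem hmax, hwd₀,
    weightedHomogeneousComponent_add_eq_of_weight_lt hp hq]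

end Face

theorem face_jac_eq_jac_face_general (f g : MvPolynomial (Fin 2) ℝ)
    (ξ : ℝ × ℝ)
    (hJ : Jac (face ξ f) (face ξ g) ≠ 0) :
    face ξ (Jac f g) = Jac (face ξ f) (face ξ g) := by
  have hf : f ≠ 0 := by
    rintro rfl
    exact hJ (by rw [face_zero, jac_zero_left])
  have hg : g ≠ 0 := by
    rintro rfl
    exact hJ (by rw [face_zero, jac_zero_right])
  obtain ⟨a, hfa, hF⟩ := exists_face_eq_weightedHomogeneousComponent ξ hf
  obtain ⟨b, hgb, hG⟩ := exists_face_eq_weightedHomogeneousComponent ξ hg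
  rw [hF, hG] at hJ ⊢
  set w := faceWeight ξ
  set F := weightedHomogeneousComponent w a f
  set G := weightedHomogeneousComponent w b g
  have hFa : F.IsWeightedHomogeneous w a := weightedHomogeneousComponent_isWeightedHomogeneous a f
  have hGb : G.IsWeightedHomogeneous w b := weightedHomogeneousComponent_isWeightedHomogeneous b g
  have hsplit : Jac f g = Jac F G + (Jac F (g - G) + Jac (f - F) g) := by
    simp only [Jac, map_sub]
    ring
  have hrest : ∀ d ∈ (Jac F (g - G) + Jac (f - F) g).support, weight w d < a + b - w 0 - w 1 := by
    intro d hd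
    rcases Finset.mem_union.mp (support_add hd) with h | h
    · exact weight_lt_of_mem_support_jac hFa.weight_le
        (weight_lt_of_mem_support_sub_weightedHomogeneousComponent hgb) d h
    · rw [jac_swap, support_neg] at h
      exact (weight_lt_of_mem_support_jac hgb
        (weight_lt_of_mem_support_sub_weightedHomogeneousComponent hfa) d h).trans_eq (by ring)
  rw [hsplit]
  exact face_add_eq_of_weight_lt (hFa.jac hGb) hJ hrest

theorem face_jac_eq_jac_face (f g : MvPolynomial (Fin 2) ℝ)
    (ξ : ℝ × ℝ) (hξ : ξ ≠ 0)
    (hJ : Jac (face ξ f) (face ξ g) ≠ 0) :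
    face ξ (Jac f g) = Jac (face ξ f) (face ξ g) :=
  face_jac_eq_jac_face_general f g ξ hJ
end

section
/- Let f, g ∈ ℝ[x,y] with ξ = (−1,1). Suppose the symbolic restriction f^ξ equals y(xy − b)² for some b ≠ 0, and the maximum of −i + j over the support of g equals −1. Then Jac(f,g) attains both positive and negative values on ℝ². -/
open MvPolynomial

namespace JacAux

noncomputable def dm (a c : ℕ) : Fin 2 →₀ ℕ := Finsupp.single 0 a + Finsupp.single 1 c

@[simp] lemma dm0 (a c : ℕ) : dm a c 0 = a := by simp [dm, Finsupp.single_apply]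
@[simp] lemma dm1 (a c : ℕ) : dm a c 1 = c := by simp [dm, Finsupp.single_apply]

lemma eq_dm (m : Fin 2 →₀ ℕ) : m = dm (m 0) (m 1) := by
  ext i; fin_cases i <;> simp [dm, Finsupp.single_apply]

lemma monomial_dm (a c : ℕ) (q : ℝ) :
    monomial (dm a c) q = C q * X 0 ^ a * X 1 ^ c := by
  rw [C_apply, X_pow_eq_monomial, X_pow_eq_monomial, monomial_mul, monomial_mul, dm]
  simp

/-- weight bound: every monomial has `m 1 ≤ m 0 + a`. -/
def wb (p : MvPolynomial (Fin 2) ℝ) (a : ℤ) : Prop :=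
  ∀ m ∈ p.support, (m 1 : ℤ) ≤ (m 0 : ℤ) + a

lemma wb_mono {p a a'} (h : a ≤ a') (hp : wb p a) : wb p a' :=
  fun m hm => (hp m hm).trans (by omega)

lemma wb_add {p q a} (hp : wb p a) (hq : wb q a) : wb (p + q) a := by
  intro m hm
  rcases Finset.mem_union.mp (MvPolynomial.support_add hm) with h | h
  exacts [hp m h, hq m h]

lemma wb_sub {p q a} (hp : wb p a) (hq : wb q a) : wb (p - q) a := by
  rw [sub_eq_add_neg]
  refine wb_add hp (fun m hm => hq m ?_)
  rwa [MvPolynomial.support_neg] at hm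

lemma wb_mul {p q a c} (hp : wb p a) (hq : wb q c) : wb (p * q) (a + c) := by
  classical
  intro m hm
  have := MvPolynomial.support_mul p q hm
  rw [Finset.mem_add] at this
  obtain ⟨m1, hm1, m2, hm2, rfl⟩ := this
  have h1 := hp m1 hm1
  have h2 := hq m2 hm2
  simp only [Finsupp.add_apply]
  push_cast
  omega

lemma mem_support_pderiv {i : Fin 2} {p : MvPolynomial (Fin 2) ℝ} {m : Fin 2 →₀ ℕ}
    (h : m ∈ (pderiv i p).support) :
    ∃ v ∈ p.support, v i ≠ 0 ∧ m = v - Finsupp.single i 1 := by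
  classical
  have hp : pderiv i p
      = ∑ v ∈ p.support, monomial (v - Finsupp.single i 1) (coeff v p * v i) := by
    conv_lhs => rw [← p.support_sum_monomial_coeff]
    rw [map_sum]
    refine Finset.sum_congr rfl fun v _ => ?_
    simp [pderiv_monomial]
  rw [hp] at h
  have := MvPolynomial.support_sum h
  rw [Finset.mem_biUnion] at this
  obtain ⟨v, hv, hm⟩ := this
  rw [MvPolynomial.support_monomial] at hm
  split_ifs at hm with h0
  · simp at hm
  · refine ⟨v, hv, ?_, Finset.mem_singleton.mp hm⟩
    intro hvi
    exact h0 (by simp [hvi])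

lemma wb_pderiv0 {p a} (hp : wb p a) : wb (pderiv 0 p) (a + 1) := by
  intro m hm
  obtain ⟨v, hv, hvi, rfl⟩ := mem_support_pderiv hm
  have := hp v hv
  have e0 : (v - Finsupp.single 0 1 : Fin 2 →₀ ℕ) 0 = v 0 - 1 := by simp [Finsupp.sub_apply]
  have e1 : (v - Finsupp.single 0 1 : Fin 2 →₀ ℕ) 1 = v 1 := by
    simp [Finsupp.sub_apply, Finsupp.single_apply]
  rw [e0, e1]
  omega

lemma wb_pderiv1 {p a} (hp : wb p a) : wb (pderiv 1 p) (a - 1) := by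
  intro m hm
  obtain ⟨v, hv, hvi, rfl⟩ := mem_support_pderiv hm
  have := hp v hv
  have e0 : (v - Finsupp.single 1 1 : Fin 2 →₀ ℕ) 0 = v 0 := by
    simp [Finsupp.sub_apply, Finsupp.single_apply]
  have e1 : (v - Finsupp.single 1 1 : Fin 2 →₀ ℕ) 1 = v 1 - 1 := by simp [Finsupp.sub_apply]
  rw [e0, e1]
  omega

lemma wb_Jac {p q a c} (hp : wb p a) (hq : wb q c) : wb (Jac p q) (a + c) := by
  have h1 := wb_mul (wb_pderiv0 hp) (wb_pderiv1 hq)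
  have h2 := wb_mul (wb_pderiv1 hp) (wb_pderiv0 hq)
  have e1 : a + 1 + (c - 1) = a + c := by ring
  have e2 : a - 1 + (c + 1) = a + c := by ring
  rw [e1] at h1; rw [e2] at h2
  exact wb_sub h1 h2

lemma coeff_sum_monomial {S : Finset (Fin 2 →₀ ℕ)} {c : (Fin 2 →₀ ℕ) → ℝ} (n : Fin 2 →₀ ℕ) :
    coeff n (∑ m ∈ S, monomial m (c m)) = if n ∈ S then c n else 0 := by
  classical
  rw [MvPolynomial.coeff_sum]
  simp only [coeff_monomial]
  exact Finset.sum_ite_eq' S n c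



lemma Jac_add_right (f p q : MvPolynomial (Fin 2) ℝ) :
    Jac f (p + q) = Jac f p + Jac f q := by
  unfold Jac; simp only [map_add]; ring

lemma jac_key (b : ℝ) (Q : Polynomial ℝ) :
    Jac (X 1 * (X 0 * X 1 - C b) ^ 2)
        (X 0 * Polynomial.aeval (X 0 * X 1 : MvPolynomial (Fin 2) ℝ) Q)
      = Polynomial.aeval (X 0 * X 1 : MvPolynomial (Fin 2) ℝ)
          (-Polynomial.derivative
            (Polynomial.X * (Polynomial.X - Polynomial.C b) ^ 2 * Q)) := by
  induction Q using Polynomial.induction_on' with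
  | add p q hp hq =>
    rw [map_add, mul_add, Jac_add_right, hp, hq, mul_add, Polynomial.derivative_add,
      neg_add, map_add]
  | monomial n a =>
    rw [Polynomial.aeval_monomial]
    have hre : Polynomial.X * (Polynomial.X - Polynomial.C b) ^ 2 * Polynomial.monomial n a
        = Polynomial.C a * (Polynomial.X ^ (n + 1) * (Polynomial.X - Polynomial.C b) ^ 2) := by
      rw [← Polynomial.C_mul_X_pow_eq_monomial]; ring
    rw [hre]
    unfold Jac
    have hsimp : True := trivial
    cases n with
    | zero =>
      simp only [pow_zero, pow_one, mul_one, zero_add, pderiv_mul, pderiv_pow, pderiv_X_self,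
        pderiv_X_of_ne (show (1:Fin 2) ≠ 0 by decide), pderiv_X_of_ne (show (0:Fin 2) ≠ 1 by decide),
        map_sub, map_mul, map_pow, map_add, map_neg, map_zero, map_one, map_natCast, map_ofNat,
        Polynomial.derivative_mul, Polynomial.derivative_pow, Polynomial.derivative_X,
        Polynomial.derivative_sub, Polynomial.derivative_C, Polynomial.derivative_X_pow,
        Polynomial.aeval_X, Polynomial.aeval_C, algebraMap_eq, pderiv_C,
        Nat.add_sub_cancel, one_mul, mul_zero, zero_mul, Nat.cast_ofNat, Nat.cast_add,
        Nat.cast_one]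
      push_cast
      ring
    | succ k =>
      simp only [pow_zero, pow_one, mul_one, pderiv_mul, pderiv_pow, pderiv_X_self,
        pderiv_X_of_ne (show (1:Fin 2) ≠ 0 by decide), pderiv_X_of_ne (show (0:Fin 2) ≠ 1 by decide),
        map_sub, map_mul, map_pow, map_add, map_neg, map_zero, map_one, map_natCast, map_ofNat,
        Polynomial.derivative_mul, Polynomial.derivative_pow, Polynomial.derivative_X,
        Polynomial.derivative_sub, Polynomial.derivative_C, Polynomial.derivative_X_pow,
        Polynomial.aeval_X, Polynomial.aeval_C, algebraMap_eq, pderiv_C,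
        Nat.add_sub_cancel, one_mul, mul_zero, zero_mul, Nat.cast_ofNat, Nat.cast_add,
        Nat.cast_one]
      push_cast
      ring

lemma aeval_diag_support (R : Polynomial ℝ) (m : Fin 2 →₀ ℕ)
    (hm : m ∈ (Polynomial.aeval (X 0 * X 1 : MvPolynomial (Fin 2) ℝ) R).support) :
    m 0 = m 1 := by
  classical
  have hR : Polynomial.aeval (X 0 * X 1 : MvPolynomial (Fin 2) ℝ) R
      = ∑ k ∈ R.support, monomial (dm k k) (R.coeff k) := by
    conv_lhs => rw [R.as_sum_support]
    rw [map_sum]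
    refine Finset.sum_congr rfl fun k _ => ?_
    rw [Polynomial.aeval_monomial, monomial_dm, mul_pow, ← mul_assoc]
    rfl
  rw [hR] at hm
  have := MvPolynomial.support_sum hm
  rw [Finset.mem_biUnion] at this
  obtain ⟨k, hk, hmk⟩ := this
  have := MvPolynomial.support_monomial_subset hmk
  rw [Finset.mem_singleton] at this
  subst this
  simp

lemma deriv_both_signs (b : ℝ) (hb : b ≠ 0) (Q : Polynomial ℝ) (hQ : Q ≠ 0) :
    (∃ u : ℝ, 0 < Polynomial.eval u
        (-Polynomial.derivative (Polynomial.X * (Polynomial.X - Polynomial.C b) ^ 2 * Q)))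
    ∧ (∃ u : ℝ, Polynomial.eval u
        (-Polynomial.derivative (Polynomial.X * (Polynomial.X - Polynomial.C b) ^ 2 * Q)) < 0) := by
  set P : Polynomial ℝ := Polynomial.X * (Polynomial.X - Polynomial.C b) ^ 2 with hP
  set H : Polynomial ℝ := P * Q with hHdef
  have hPne : P ≠ 0 := by
    intro h
    have h2 : Polynomial.eval (2 * b) P = 2 * b ^ 3 := by
      simp only [hP, Polynomial.eval_mul, Polynomial.eval_pow, Polynomial.eval_sub,
        Polynomial.eval_X, Polynomial.eval_C]
      ring
    rw [h, Polynomial.eval_zero] at h2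
    have h3 : b ^ 3 = 0 := by linarith
    exact pow_ne_zero 3 hb h3
  have hH : H ≠ 0 := mul_ne_zero hPne hQ
  have hH0 : H.eval 0 = 0 := by simp [hHdef, hP]
  have hHb : H.eval b = 0 := by simp [hHdef, hP]
  have key : ∀ (mono : Monotone fun x => H.eval x), False := by
    intro mono
    apply hH
    apply Polynomial.eq_zero_of_infinite_isRoot
    apply Set.Infinite.mono (s := Set.Icc (min 0 b) (max 0 b))
    · intro x hx
      have h1 : H.eval (min 0 b) = 0 := by
        rcases le_total 0 b with h | h
        · rw [min_eq_left h]; exact hH0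
        · rw [min_eq_right h]; exact hHb
      have h2 : H.eval (max 0 b) = 0 := by
        rcases le_total 0 b with h | h
        · rw [max_eq_right h]; exact hHb
        · rw [max_eq_left h]; exact hH0
      have l1 : H.eval (min 0 b) ≤ H.eval x := mono hx.1
      have l2 : H.eval x ≤ H.eval (max 0 b) := mono hx.2
      simp only [Set.mem_setOf_eq, Polynomial.IsRoot]
      linarith
    · exact Set.Icc_infinite (min_lt_max.mpr (Ne.symm hb))
  have keyA : ∀ (anti : Antitone fun x => H.eval x), False := by
    intro anti
    apply hH
    apply Polynomial.eq_zero_of_infinite_isRoot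
    apply Set.Infinite.mono (s := Set.Icc (min 0 b) (max 0 b))
    · intro x hx
      have h1 : H.eval (min 0 b) = 0 := by
        rcases le_total 0 b with h | h
        · rw [min_eq_left h]; exact hH0
        · rw [min_eq_right h]; exact hHb
      have h2 : H.eval (max 0 b) = 0 := by
        rcases le_total 0 b with h | h
        · rw [max_eq_right h]; exact hHb
        · rw [max_eq_left h]; exact hH0
      have l1 : H.eval x ≤ H.eval (min 0 b) := anti hx.1
      have l2 : H.eval (max 0 b) ≤ H.eval x := anti hx.2
      simp only [Set.mem_setOf_eq, Polynomial.IsRoot]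
      linarith
    · exact Set.Icc_infinite (min_lt_max.mpr (Ne.symm hb))
  constructor
  · by_contra hpos
    push_neg at hpos
    apply key
    apply monotone_of_deriv_nonneg (H.differentiable)
    intro x
    rw [Polynomial.deriv]
    have := hpos x
    rw [Polynomial.eval_neg] at this
    linarith
  · by_contra hneg
    push_neg at hneg
    apply keyA
    apply antitone_of_deriv_nonpos (H.differentiable)
    intro x
    rw [Polynomial.deriv]
    have := hneg x
    rw [Polynomial.eval_neg] at this
    linarith

end JacAux

open JacAux

theorem jac_changes_sign_of_degenerate_face (f g : MvPolynomial (Fin 2) ℝ) (b : ℝ) (hb : b ≠ 0)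
    (hface : face (-1, 1) f = X 1 * (X 0 * X 1 - C b) ^ 2)
    (hmax : ∃ m ∈ g.support, -(m 0 : ℤ) + (m 1 : ℤ) = -1)
    (hle : ∀ m ∈ g.support, -(m 0 : ℤ) + (m 1 : ℤ) ≤ -1) :
    (∃ p : Fin 2 → ℝ, 0 < eval p (Jac f g)) ∧
    (∃ q : Fin 2 → ℝ, eval q (Jac f g) < 0) := by
  classical
  set f₁ : MvPolynomial (Fin 2) ℝ := X 1 * (X 0 * X 1 - C b) ^ 2 with hf₁def
  have hrhs : f₁ = monomial (dm 2 3) 1 + monomial (dm 1 2) (-(2*b)) + monomial (dm 0 1) (b^2) := by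
    rw [hf₁def, monomial_dm, monomial_dm, monomial_dm]
    simp only [map_pow, map_neg, map_mul, map_ofNat, map_one]
    ring
  have hne1 : dm 2 3 ≠ dm 0 1 := fun h => by simpa using congrArg (fun z => z 0) h
  have hne2 : dm 1 2 ≠ dm 0 1 := fun h => by simpa using congrArg (fun z => z 0) h
  have hcoeff_f₁ : ∀ n, coeff n f₁ = (if dm 2 3 = n then 1 else 0)
      + (if dm 1 2 = n then -(2*b) else 0) + (if dm 0 1 = n then b^2 else 0) := by
    intro n
    rw [hrhs, MvPolynomial.coeff_add, MvPolynomial.coeff_add, coeff_monomial, coeff_monomial,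
      coeff_monomial]
  unfold face at hface
  simp only [show ((-1,1):ℝ×ℝ).1 = -1 from rfl, show ((-1,1):ℝ×ℝ).2 = 1 from rfl] at hface
  have hc : ∀ n, (if n ∈ f.support.filter (fun m => ∀ m' ∈ f.support,
      -1 * (m' 0 : ℝ) + 1 * (m' 1 : ℝ) ≤ -1 * (m 0 : ℝ) + 1 * (m 1 : ℝ)) then coeff n f else 0)
      = coeff n f₁ := by
    intro n
    rw [← hface, coeff_sum_monomial]
  have h01 : dm 0 1 ∈ f.support.filter (fun m => ∀ m' ∈ f.support,
      -1 * (m' 0 : ℝ) + 1 * (m' 1 : ℝ) ≤ -1 * (m 0 : ℝ) + 1 * (m 1 : ℝ)) := by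
    have := hc (dm 0 1)
    rw [hcoeff_f₁, if_neg hne1, if_neg hne2, if_pos rfl] at this
    by_contra hmem
    rw [if_neg hmem] at this
    simp only [zero_add] at this
    exact pow_ne_zero 2 hb this.symm
  have A1 : ∀ m ∈ f.support, m 1 ≤ m 0 + 1 := by
    intro m hm
    have h2 := (Finset.mem_filter.mp h01).2 m hm
    simp only [dm0, dm1] at h2
    have h3 : (m 1 : ℝ) ≤ (m 0 : ℝ) + 1 := by push_cast at h2; linarith
    exact_mod_cast h3
  have A2 : ∀ m : Fin 2 →₀ ℕ, m 1 = m 0 + 1 → coeff m f = coeff m f₁ := by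
    intro m hm1
    by_cases hmem : m ∈ f.support.filter (fun m => ∀ m' ∈ f.support,
        -1 * (m' 0 : ℝ) + 1 * (m' 1 : ℝ) ≤ -1 * (m 0 : ℝ) + 1 * (m 1 : ℝ))
    · have := hc m; rwa [if_pos hmem] at this
    · have h0 : coeff m f₁ = 0 := by
        have := hc m; rw [if_neg hmem] at this; exact this.symm
      rw [h0]
      by_contra hne
      apply hmem
      refine Finset.mem_filter.mpr ⟨mem_support_iff.mpr hne, ?_⟩
      intro m' hm'
      have h1 : (m' 1 : ℝ) ≤ (m' 0 : ℝ) + 1 := by exact_mod_cast A1 m' hm'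
      have h2 : (m 1 : ℝ) = (m 0 : ℝ) + 1 := by exact_mod_cast hm1
      linarith
  have wbf₁ : wb f₁ 1 := by
    intro m hm
    rw [hrhs] at hm
    rcases Finset.mem_union.mp (MvPolynomial.support_add hm) with h | h
    · rcases Finset.mem_union.mp (MvPolynomial.support_add h) with h' | h'
      · have := Finset.mem_singleton.mp (MvPolynomial.support_monomial_subset h')
        subst this; simp
      · have := Finset.mem_singleton.mp (MvPolynomial.support_monomial_subset h')
        subst this; simp
    · have := Finset.mem_singleton.mp (MvPolynomial.support_monomial_subset h)
      subst this; simp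
  have wbf₀ : wb (f - f₁) 0 := by
    intro m hm
    have hne : coeff m f - coeff m f₁ ≠ 0 := by
      have := mem_support_iff.mp hm
      rwa [MvPolynomial.coeff_sub] at this
    by_contra hgt
    push_neg at hgt
    apply hne
    rcases Nat.lt_or_ge (m 0 + 1) (m 1) with hcase | hcase
    · have hf0 : coeff m f = 0 := by
        by_contra hcf
        have := A1 m (mem_support_iff.mpr hcf); omega
      have hf10 : coeff m f₁ = 0 := by
        by_contra hcf
        have := wbf₁ m (mem_support_iff.mpr hcf); omega
      rw [hf0, hf10, sub_self]
    · have he : m 1 = m 0 + 1 := by omega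
      rw [A2 m he, sub_self]
  -- the g side
  set Sg := g.support.filter (fun m => m 0 = m 1 + 1) with hSg
  set Q : Polynomial ℝ := ∑ m ∈ Sg, Polynomial.C (coeff m g) * Polynomial.X ^ (m 1) with hQdef
  set g₁ : MvPolynomial (Fin 2) ℝ := ∑ m ∈ Sg, monomial m (coeff m g) with hg₁def
  have hg₁ : X 0 * Polynomial.aeval (X 0 * X 1 : MvPolynomial (Fin 2) ℝ) Q = g₁ := by
    rw [hQdef, hg₁def, map_sum, Finset.mul_sum]
    refine Finset.sum_congr rfl fun m hm => ?_
    rw [hSg] at hm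
    have hm0 : m 0 = m 1 + 1 := (Finset.mem_filter.mp hm).2
    rw [show m = dm (m 1 + 1) (m 1) from by rw [← hm0]; exact eq_dm m]
    simp only [map_mul, map_pow, Polynomial.aeval_C, Polynomial.aeval_X, algebraMap_eq,
      monomial_dm, dm0, dm1]
    ring
  have hQne : Q ≠ 0 := by
    obtain ⟨m, hmg, hmw⟩ := hmax
    have hm0 : m 0 = m 1 + 1 := by omega
    have hmS : m ∈ Sg := by rw [hSg]; exact Finset.mem_filter.mpr ⟨hmg, hm0⟩
    intro h0
    have hQc : Q.coeff (m 1) = coeff m g := by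
      rw [hQdef, Polynomial.finset_sum_coeff]
      rw [Finset.sum_eq_single m]
      · simp [Polynomial.coeff_C_mul, Polynomial.coeff_X_pow]
      · intro m' hm'S hm'ne
        rw [hSg] at hm'S
        have h1 : m' 0 = m' 1 + 1 := (Finset.mem_filter.mp hm'S).2
        simp only [Polynomial.coeff_C_mul, Polynomial.coeff_X_pow]
        rw [if_neg, mul_zero]
        intro heq
        apply hm'ne
        have e := eq_dm m'
        rw [e, h1, ← heq, ← hm0, ← eq_dm]
      · intro h; exact absurd hmS h
    rw [h0, Polynomial.coeff_zero] at hQc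
    exact (mem_support_iff.mp hmg) hQc.symm
  have wbg : wb g (-1) := fun m hm => by have := hle m hm; omega
  have wbg₁ : wb g₁ (-1) := by
    intro m hm
    rw [hg₁def] at hm
    have := MvPolynomial.support_sum hm
    rw [Finset.mem_biUnion] at this
    obtain ⟨v, hv, hmv⟩ := this
    have := Finset.mem_singleton.mp (MvPolynomial.support_monomial_subset hmv)
    subst this
    rw [hSg] at hv
    have := (Finset.mem_filter.mp hv).2
    omega
  have wbg₂ : wb (g - g₁) (-2) := by
    intro m hm
    have hcoef : coeff m g - coeff m g₁ ≠ 0 := by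
      have := mem_support_iff.mp hm
      rwa [MvPolynomial.coeff_sub] at this
    have hg₁coeff : coeff m g₁ = if m ∈ Sg then coeff m g else 0 := by
      rw [hg₁def]; exact coeff_sum_monomial m
    by_cases hmS : m ∈ Sg
    · rw [hg₁coeff, if_pos hmS, sub_self] at hcoef; exact absurd rfl hcoef
    · rw [hg₁coeff, if_neg hmS, sub_zero] at hcoef
      have h1 := hle m (mem_support_iff.mpr hcoef)
      have h2 : ¬ (m 0 = m 1 + 1) := fun h => hmS (by
        rw [hSg]; exact Finset.mem_filter.mpr ⟨mem_support_iff.mpr hcoef, h⟩)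
      omega
  -- decomposition
  have hdec : Jac f g = Jac f₁ g₁ + (Jac f₁ (g - g₁) + Jac (f - f₁) g) := by
    unfold Jac; simp only [map_sub]; ring
  have wbE : wb (Jac f₁ (g - g₁) + Jac (f - f₁) g) (-1) := by
    refine wb_add ?_ ?_
    · have := wb_Jac wbf₁ wbg₂
      have e : (1:ℤ) + -2 = -1 := by norm_num
      rwa [e] at this
    · have := wb_Jac wbf₀ wbg
      have e : (0:ℤ) + -1 = -1 := by norm_num
      rwa [e] at this
  have wbh : wb (Jac f g) 0 := by
    rw [hdec]
    refine wb_add ?_ (wb_mono (by norm_num) wbE)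
    have := wb_Jac wbf₁ wbg₁
    have e : (1:ℤ) + -1 = 0 := by norm_num
    rwa [e] at this
  have wbh₁ : wb (Jac f₁ g₁) 0 := by
    have := wb_Jac wbf₁ wbg₁
    have e : (1:ℤ) + -1 = 0 := by norm_num
    rwa [e] at this
  have hdiag : ∀ m : Fin 2 →₀ ℕ, m 0 = m 1 → coeff m (Jac f g) = coeff m (Jac f₁ g₁) := by
    intro m hm
    rw [hdec, MvPolynomial.coeff_add]
    have hE : coeff m (Jac f₁ (g - g₁) + Jac (f - f₁) g) = 0 := by
      by_contra hne
      have := wbE m (mem_support_iff.mpr hne)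
      omega
    rw [hE, add_zero]
  set R : Polynomial ℝ :=
    -Polynomial.derivative (Polynomial.X * (Polynomial.X - Polynomial.C b) ^ 2 * Q) with hRdef
  have hkey : Jac f₁ g₁ = Polynomial.aeval (X 0 * X 1 : MvPolynomial (Fin 2) ℝ) R := by
    rw [← hg₁, hf₁def, hRdef]
    exact jac_key b Q
  -- the one-variable family
  set Jp : ℝ → Polynomial ℝ := fun u => ∑ m ∈ (Jac f g).support,
    Polynomial.C (coeff m (Jac f g) * u ^ (m 1)) * Polynomial.X ^ (m 0 - m 1) with hJp
  have E1 : ∀ (u ε : ℝ), ε ≠ 0 → (Jp u).eval ε = eval ![ε, u/ε] (Jac f g) := by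
    intro u ε hε
    conv_rhs => rw [← (Jac f g).support_sum_monomial_coeff]
    rw [map_sum, hJp, Polynomial.eval_finset_sum]
    refine Finset.sum_congr rfl fun m hm => ?_
    rw [MvPolynomial.eval_monomial, Polynomial.eval_mul, Polynomial.eval_C, Polynomial.eval_pow,
      Polynomial.eval_X, Finsupp.prod_fintype _ _ (fun i => pow_zero _), Fin.prod_univ_two]
    simp only [Matrix.cons_val_zero, Matrix.cons_val_one, Matrix.head_cons]
    have hle' : m 1 ≤ m 0 := by have := wbh m hm; omega
    rw [div_pow, show ε ^ (m 0) = ε ^ (m 0 - m 1) * ε ^ (m 1) by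
      rw [← pow_add, Nat.sub_add_cancel hle']]
    have hεp : (ε : ℝ) ^ (m 1) ≠ 0 := pow_ne_zero _ hε
    field_simp
  have E2 : ∀ u : ℝ, (Jp u).eval 0 = Polynomial.eval u R := by
    intro u
    have hRr : Polynomial.eval u R = eval ![1, u] (Jac f₁ g₁) := by
      rw [hkey]
      have step : MvPolynomial.aeval (![1, u]) (Polynomial.aeval
          (X 0 * X 1 : MvPolynomial (Fin 2) ℝ) R)
          = Polynomial.aeval (MvPolynomial.aeval (![1, u]) (X 0 * X 1 :
              MvPolynomial (Fin 2) ℝ)) R :=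
        (Polynomial.aeval_algHom_apply _ _ _).symm
      have hae : ∀ p : MvPolynomial (Fin 2) ℝ, MvPolynomial.aeval (![1, u]) p
          = eval ![1, u] p := fun p => rfl
      rw [hae] at step
      rw [step]
      have : (MvPolynomial.aeval (![(1:ℝ), u])) (X 0 * X 1 : MvPolynomial (Fin 2) ℝ) = u := by
        simp [hae]
      rw [this, Polynomial.coe_aeval_eq_eval]
    rw [hRr]
    -- write RHS as a sum over the support of Jac f₁ g₁
    conv_rhs => rw [← (Jac f₁ g₁).support_sum_monomial_coeff]
    rw [map_sum, hJp, Polynomial.eval_finset_sum]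
    have lhs_eq : ∀ m ∈ (Jac f g).support,
        (Polynomial.C (coeff m (Jac f g) * u ^ (m 1)) * Polynomial.X ^ (m 0 - m 1)).eval 0
        = (if m 0 = m 1 then coeff m (Jac f g) * u ^ (m 1) else 0) := by
      intro m hm
      rw [Polynomial.eval_mul, Polynomial.eval_C, Polynomial.eval_pow, Polynomial.eval_X]
      have hle' : m 1 ≤ m 0 := by have := wbh m hm; omega
      by_cases hdg : m 0 = m 1
      · rw [if_pos hdg, hdg, Nat.sub_self, pow_zero, mul_one]
      · rw [if_neg hdg, zero_pow (by omega), mul_zero]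
    have rhs_eq : ∀ m ∈ (Jac f₁ g₁).support,
        eval ![1, u] (monomial m (coeff m (Jac f₁ g₁)))
        = (if m 0 = m 1 then coeff m (Jac f g) * u ^ (m 1) else 0) := by
      intro m hm
      have hdg : m 0 = m 1 := aeval_diag_support R m (by rwa [← hkey])
      rw [MvPolynomial.eval_monomial, Finsupp.prod_fintype _ _ (fun i => pow_zero _),
        Fin.prod_univ_two]
      simp only [Matrix.cons_val_zero, Matrix.cons_val_one, Matrix.head_cons]
      rw [if_pos hdg, one_pow, one_mul, hdiag m hdg]
    rw [Finset.sum_congr rfl lhs_eq, Finset.sum_congr rfl rhs_eq]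
    have hz1 : ∀ m ∈ (Jac f g).support ∪ (Jac f₁ g₁).support, m ∉ (Jac f g).support →
        (if m 0 = m 1 then coeff m (Jac f g) * u ^ (m 1) else 0) = 0 := by
      intro m _ hmn
      by_cases hdg : m 0 = m 1
      · rw [if_pos hdg, MvPolynomial.notMem_support_iff.mp hmn, zero_mul]
      · rw [if_neg hdg]
    have hz2 : ∀ m ∈ (Jac f g).support ∪ (Jac f₁ g₁).support, m ∉ (Jac f₁ g₁).support →
        (if m 0 = m 1 then coeff m (Jac f g) * u ^ (m 1) else 0) = 0 := by
      intro m _ hmn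
      by_cases hdg : m 0 = m 1
      · rw [if_pos hdg, hdiag m hdg, MvPolynomial.notMem_support_iff.mp hmn, zero_mul]
      · rw [if_neg hdg]
    rw [Finset.sum_subset Finset.subset_union_left hz1,
      Finset.sum_subset Finset.subset_union_right hz2]
  -- final assembly
  obtain ⟨⟨uP, huP⟩, ⟨uN, huN⟩⟩ := deriv_both_signs b hb Q hQne
  rw [← hRdef] at huP huN
  constructor
  · have h0 : 0 < (Jp uP).eval 0 := by rw [E2]; exact huP
    have hcont : Continuous fun x : ℝ => (Jp uP).eval x := (Jp uP).continuous
    have hopen : {x : ℝ | 0 < (Jp uP).eval x} ∈ nhds (0:ℝ) :=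
      (isOpen_lt continuous_const hcont).mem_nhds h0
    have hmem : ({x : ℝ | 0 < (Jp uP).eval x} ∩ ({0}ᶜ : Set ℝ)) ∈
        nhdsWithin (0:ℝ) ({0}ᶜ : Set ℝ) :=
      Filter.inter_mem (nhdsWithin_le_nhds hopen) self_mem_nhdsWithin
    obtain ⟨ε, hε1, hε2⟩ := Filter.nonempty_of_mem hmem
    have hεne : ε ≠ 0 := fun h => hε2 (by simp [h])
    exact ⟨![ε, uP/ε], by rw [← E1 uP ε hεne]; exact hε1⟩
  · have h0 : (Jp uN).eval 0 < 0 := by rw [E2]; exact huN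
    have hcont : Continuous fun x : ℝ => (Jp uN).eval x := (Jp uN).continuous
    have hopen : {x : ℝ | (Jp uN).eval x < 0} ∈ nhds (0:ℝ) :=
      (isOpen_lt hcont continuous_const).mem_nhds h0
    have hmem : ({x : ℝ | (Jp uN).eval x < 0} ∩ ({0}ᶜ : Set ℝ)) ∈
        nhdsWithin (0:ℝ) ({0}ᶜ : Set ℝ) :=
      Filter.inter_mem (nhdsWithin_le_nhds hopen) self_mem_nhdsWithin
    obtain ⟨ε, hε1, hε2⟩ := Filter.nonempty_of_mem hmem
    have hεne : ε ≠ 0 := fun h => hε2 (by simp [h])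
    exact ⟨![ε, uN/ε], by rw [← E1 uN ε hεne]; exact hε1⟩
end

section
/- Let f, g ∈ ℝ[x,y] and ξ ∈ ℝ² nonzero. Suppose the face Δ_f^ξ of the Newton polygon of f is a single point α, the face Δ_g^ξ is a single point β, the vectors α and β are linearly independent over ℝ, and at least one coordinate of α + β is even. Then Jac(f,g) attains both positive and negative values on ℝ². -/
open MvPolynomial

open Classical in
/-- The set of exponent vectors of `h` maximizing `⟨ξ, ·⟩` over the support
(the lattice points of the face `Δ_h^ξ` lying in the support of `h`). -/
noncomputable def faceSupport (ξ : ℝ × ℝ) (h : MvPolynomial (Fin 2) ℝ) :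
    Finset (Fin 2 →₀ ℕ) :=
  h.support.filter (fun m => ∀ m' ∈ h.support,
      ξ.1 * (m' 0 : ℝ) + ξ.2 * (m' 1 : ℝ) ≤ ξ.1 * (m 0 : ℝ) + ξ.2 * (m 1 : ℝ))

/-!
Along the monomial curve `t ↦ (p₀ t^{ξ₀}, p₁ t^{ξ₁})`, a polynomial whose `ξ`-weight is maximised
only at the exponent `γ` behaves like `coeff γ · p^γ · t^{⟨ξ,γ⟩}` as `t → ∞`. The Euler operators
`xᵢ ∂ᵢ` keep the exponents and scale the coefficient of `x^m` by `mᵢ`, so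
`x y · Jac(f, g) = (x f_x)(y g_y) - (y f_y)(x g_x)` behaves like
`det(α, β) · coeff α f · coeff β g · p^{α+β} · t^{⟨ξ,α+β⟩}`, which is nonzero by linear
independence. If `α₀ + β₀` is even, changing `p = (1, 1)` to `p = (-1, 1)` leaves `p^{α+β}`
unchanged but flips the sign of the factor `x y`, so `Jac(f, g)` takes opposite signs on the two
curves for large `t`.
-/

open Filter Topology

noncomputable def weightedCurve {ι : Type*} (ξ p : ι → ℝ) (t : ℝ) : ι → ℝ :=
  fun j => p j * t ^ ξ j

/-- `γ` need not lie in the support of `h`. -/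
def IsDominantExponent {ι : Type*} (ξ : ι → ℝ) (h : MvPolynomial ι ℝ) (γ : ι →₀ ℕ) : Prop :=
  ∀ m ∈ h.support, m ≠ γ → Finsupp.weight ξ m < Finsupp.weight ξ γ

section WeightedCurve

variable {ι : Type*} (ξ p : ι → ℝ)

lemma eval_monomial_weightedCurve {t : ℝ} (ht : 0 < t) (m : ι →₀ ℕ) (c : ℝ) :
    eval (weightedCurve ξ p t) (monomial m c) =
      c * m.prod (fun j e => p j ^ e) * t ^ Finsupp.weight ξ m := by
  rw [eval_monomial, Finsupp.weight_apply, Finsupp.sum, Real.rpow_sum_of_pos ht, mul_assoc,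
    Finsupp.prod, Finsupp.prod, ← Finset.prod_mul_distrib]
  congr 1
  refine Finset.prod_congr rfl fun j _ => ?_
  rw [weightedCurve, mul_pow, nsmul_eq_mul, mul_comm (_ : ℝ) (ξ j), Real.rpow_mul_natCast ht.le]

lemma tendsto_rpow_mul_eval_weightedCurve {h : MvPolynomial ι ℝ} {γ : ι →₀ ℕ}
    (hγ : IsDominantExponent ξ h γ) :
    Tendsto (fun t => t ^ (-Finsupp.weight ξ γ) * eval (weightedCurve ξ p t) h) atTop
      (𝓝 (coeff γ h * γ.prod fun j e => p j ^ e)) := by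
  classical
  have hterm : ∀ m ∈ h.support, Tendsto (fun t : ℝ => coeff m h * m.prod (fun j e => p j ^ e) *
      t ^ (Finsupp.weight ξ m - Finsupp.weight ξ γ)) atTop
      (𝓝 (if m = γ then coeff m h * m.prod (fun j e => p j ^ e) else 0)) := by
    intro m hm
    split_ifs with hmγ
    · simp [hmγ]
    · simpa using (tendsto_rpow_neg_atTop (sub_pos.2 (hγ m hm hmγ))).const_mul
        (coeff m h * m.prod (fun j e => p j ^ e))
  have hsum := tendsto_finsetSum _ hterm
  rw [Finset.sum_ite_eq'] at hsum
  have hlim : (if γ ∈ h.support then coeff γ h * γ.prod (fun j e => p j ^ e) else 0) =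
      coeff γ h * γ.prod fun j e => p j ^ e := by
    split_ifs with hγh
    · rfl
    · rw [notMem_support_iff.1 hγh, zero_mul]
  rw [hlim] at hsum
  refine hsum.congr' ?_
  filter_upwards [eventually_gt_atTop 0] with t ht
  conv_rhs => rw [← support_sum_monomial_coeff h]
  rw [map_sum, Finset.mul_sum]
  refine Finset.sum_congr rfl fun m _ => ?_
  rw [eval_monomial_weightedCurve ξ p ht, sub_eq_neg_add, Real.rpow_add ht]
  ring

end WeightedCurve

lemma coeff_X_mul_pderiv {ι R : Type*} [CommSemiring R] (i : ι) (m : ι →₀ ℕ)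
    (h : MvPolynomial ι R) : coeff m (X i * pderiv i h) = m i * coeff m h := by
  classical
  induction h using MvPolynomial.induction_on' with
  | monomial n c =>
    rw [X_mul_pderiv_monomial, coeff_smul, coeff_monomial]
    split_ifs with hnm
    · subst hnm; rw [nsmul_eq_mul]
    · simp
  | add h₁ h₂ h₁ih h₂ih => rw [map_add, mul_add, coeff_add, coeff_add, h₁ih, h₂ih, mul_add]

lemma support_X_mul_pderiv_subset {ι R : Type*} [CommSemiring R] (i : ι)
    (h : MvPolynomial ι R) : (X i * pderiv i h).support ⊆ h.support := by
  intro m hm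
  rw [mem_support_iff, coeff_X_mul_pderiv] at hm
  rw [mem_support_iff]
  exact right_ne_zero_of_mul hm

lemma tendsto_rpow_mul_eval_weightedCurve_X_mul_pderiv {ι : Type*} (ξ p : ι → ℝ)
    {h : MvPolynomial ι ℝ} {γ : ι →₀ ℕ} (hγ : IsDominantExponent ξ h γ) (i : ι) :
    Tendsto (fun t => t ^ (-Finsupp.weight ξ γ) * eval (weightedCurve ξ p t) (X i * pderiv i h))
      atTop (𝓝 (γ i * coeff γ h * γ.prod fun j e => p j ^ e)) := by
  have := tendsto_rpow_mul_eval_weightedCurve ξ p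
    (fun m hm => hγ m (support_X_mul_pderiv_subset i h hm))
  rwa [coeff_X_mul_pderiv] at this

lemma X_mul_X_mul_jac (f g : MvPolynomial (Fin 2) ℝ) :
    X 0 * X 1 * Jac f g =
      X 0 * pderiv 0 f * (X 1 * pderiv 1 g) - X 1 * pderiv 1 f * (X 0 * pderiv 0 g) := by
  unfold Jac
  ring

lemma tendsto_rpow_mul_eval_weightedCurve_X_mul_X_mul_jac (ξ p : Fin 2 → ℝ)
    {f g : MvPolynomial (Fin 2) ℝ} {α β : Fin 2 →₀ ℕ}
    (hα : IsDominantExponent ξ f α) (hβ : IsDominantExponent ξ g β) :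
    Tendsto (fun t => t ^ (-(Finsupp.weight ξ α + Finsupp.weight ξ β)) *
        eval (weightedCurve ξ p t) (X 0 * X 1 * Jac f g)) atTop
      (𝓝 (((α 0 : ℝ) * β 1 - α 1 * β 0) * coeff α f * coeff β g *
        (α + β).prod fun j e => p j ^ e)) := by
  have hlim := ((tendsto_rpow_mul_eval_weightedCurve_X_mul_pderiv ξ p hα 0).mul
      (tendsto_rpow_mul_eval_weightedCurve_X_mul_pderiv ξ p hβ 1)).sub
    ((tendsto_rpow_mul_eval_weightedCurve_X_mul_pderiv ξ p hα 1).mul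
      (tendsto_rpow_mul_eval_weightedCurve_X_mul_pderiv ξ p hβ 0))
  rw [Finsupp.prod_add_index' (fun _ => pow_zero _) (fun _ => pow_add _)]
  convert hlim.congr' ?_ using 2
  · ring
  filter_upwards [eventually_gt_atTop 0] with t ht
  rw [X_mul_X_mul_jac, map_sub, neg_add, Real.rpow_add ht]
  simp only [map_mul]
  ring

lemma isDominantExponent_of_faceSupport_eq_singleton {ξ : ℝ × ℝ} {h : MvPolynomial (Fin 2) ℝ}
    {γ : Fin 2 →₀ ℕ} (hface : faceSupport ξ h = {γ}) : IsDominantExponent ![ξ.1, ξ.2] h γ := by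
  intro m hm hne
  have hγ : γ ∈ faceSupport ξ h := hface ▸ Finset.mem_singleton_self γ
  simp only [faceSupport, Finset.mem_filter] at hγ
  simp only [Finsupp.weight_eq_sum, Fin.sum_univ_two, nsmul_eq_mul, Matrix.cons_val_zero,
    Matrix.cons_val_one]
  by_contra! hle
  refine hne (Finset.mem_singleton.1 (hface ▸ Finset.mem_filter.2 ⟨hm, fun m' hm' => ?_⟩))
  linarith [hγ.2 m' hm']

lemma coeff_ne_zero_of_faceSupport_eq_singleton {ξ : ℝ × ℝ} {h : MvPolynomial (Fin 2) ℝ}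
    {γ : Fin 2 →₀ ℕ} (hface : faceSupport ξ h = {γ}) : coeff γ h ≠ 0 :=
  mem_support_iff.1 (Finset.filter_subset _ _ (hface ▸ Finset.mem_singleton_self γ))

lemma exists_mul_eq_neg_one_and_prod_pow_eq_one {n : Fin 2 →₀ ℕ} (hn : Even (n 0) ∨ Even (n 1)) :
    ∃ p : Fin 2 → ℝ, p 0 * p 1 = -1 ∧ (n.prod fun j e => p j ^ e) = 1 := by
  rcases hn with hn | hn
  · exact ⟨![-1, 1], by norm_num, by simp [Finsupp.prod_fintype, Fin.prod_univ_two, hn.neg_one_pow]⟩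
  · exact ⟨![1, -1], by norm_num, by simp [Finsupp.prod_fintype, Fin.prod_univ_two, hn.neg_one_pow]⟩

lemma eventually_pos_mul_of_tendsto_rpow_mul {F G : ℝ → ℝ} {c L : ℝ} (hL : L ≠ 0)
    (hF : Tendsto (fun t => t ^ c * F t) atTop (𝓝 L))
    (hG : Tendsto (fun t => t ^ c * G t) atTop (𝓝 L)) :
    ∀ᶠ t in atTop, 0 < F t * G t := by
  filter_upwards [(hF.mul hG).eventually (eventually_gt_nhds (mul_self_pos.2 hL))] with t ht
  rw [mul_mul_mul_comm] at ht
  exact pos_of_mul_pos_right ht (mul_self_nonneg _)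

lemma det_fin_two_ne_zero_of_linearIndependent {K : Type*} [Field K] {u v : Fin 2 → K}
    (h : LinearIndependent K ![u, v]) : u 0 * v 1 - u 1 * v 0 ≠ 0 := by
  have hunit : IsUnit (Matrix.of ![u, v]) := Matrix.linearIndependent_rows_iff_isUnit.1 h
  simpa [Matrix.isUnit_iff_isUnit_det, Matrix.det_fin_two] using hunit

lemma exists_pos_and_exists_neg_of_mul_neg {Z : Type*} {F : Z → ℝ} {x y : Z}
    (h : F x * F y < 0) : (∃ p, 0 < F p) ∧ ∃ q, F q < 0 := by
  rcases mul_neg_iff.1 h with ⟨hx, hy⟩ | ⟨hx, hy⟩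
  exacts [⟨⟨x, hx⟩, ⟨y, hy⟩⟩, ⟨⟨y, hy⟩, ⟨x, hx⟩⟩]

theorem jac_changes_sign_of_vertices_general (f g : MvPolynomial (Fin 2) ℝ)
    (ξ : ℝ × ℝ) (α β : Fin 2 →₀ ℕ)
    (hα : faceSupport ξ f = {α}) (hβ : faceSupport ξ g = {β})
    (hind : LinearIndependent ℝ ![(fun i => (α i : ℝ) : Fin 2 → ℝ),
                                  (fun i => (β i : ℝ) : Fin 2 → ℝ)])
    (heven : Even (α 0 + β 0) ∨ Even (α 1 + β 1)) :
    (∃ p : Fin 2 → ℝ, 0 < eval p (Jac f g)) ∧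
    (∃ q : Fin 2 → ℝ, eval q (Jac f g) < 0) := by
  have hL := mul_ne_zero (mul_ne_zero (det_fin_two_ne_zero_of_linearIndependent hind)
      (coeff_ne_zero_of_faceSupport_eq_singleton hα))
    (coeff_ne_zero_of_faceSupport_eq_singleton hβ)
  have hlim := fun p => tendsto_rpow_mul_eval_weightedCurve_X_mul_X_mul_jac ![ξ.1, ξ.2] p
    (isDominantExponent_of_faceSupport_eq_singleton hα)
    (isDominantExponent_of_faceSupport_eq_singleton hβ)
  obtain ⟨p, hp01, hpow⟩ := exists_mul_eq_neg_one_and_prod_pow_eq_one (n := α + β) heven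
  have hlim₁ := hlim 1
  have hlim₂ := hlim p
  simp only [Pi.one_apply, one_pow, Finsupp.prod, Finset.prod_const_one, mul_one] at hlim₁
  rw [hpow, mul_one] at hlim₂
  obtain ⟨t, hprod⟩ := (eventually_pos_mul_of_tendsto_rpow_mul hL hlim₁ hlim₂).exists
  simp only [map_mul, eval_X, weightedCurve, Pi.one_apply, one_mul] at hprod
  set J₁ := eval (weightedCurve ![ξ.1, ξ.2] 1 t) (Jac f g)
  set J₂ := eval (weightedCurve ![ξ.1, ξ.2] p t) (Jac f g)
  set s := t ^ ![ξ.1, ξ.2] 0 * t ^ ![ξ.1, ξ.2] 1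
  -- the factor `x y` is `s` on the first curve and `p 0 * p 1 * s = -s` on the second
  have hprod' : 0 < s * s * -(J₁ * J₂) := by linear_combination hprod + s * s * J₁ * J₂ * hp01
  exact exists_pos_and_exists_neg_of_mul_neg
    (neg_pos.1 (pos_of_mul_pos_right hprod' (mul_self_nonneg s)))

theorem jac_changes_sign_of_vertices (f g : MvPolynomial (Fin 2) ℝ)
    (ξ : ℝ × ℝ) (hξ : ξ ≠ 0) (α β : Fin 2 →₀ ℕ)
    (hα : faceSupport ξ f = {α}) (hβ : faceSupport ξ g = {β})
    (hind : LinearIndependent ℝ ![(fun i => (α i : ℝ) : Fin 2 → ℝ),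
                                  (fun i => (β i : ℝ) : Fin 2 → ℝ)])
    (heven : Even (α 0 + β 0) ∨ Even (α 1 + β 1)) :
    (∃ p : Fin 2 → ℝ, 0 < eval p (Jac f g)) ∧
    (∃ q : Fin 2 → ℝ, eval q (Jac f g) < 0) :=
  jac_changes_sign_of_vertices_general f g ξ α β hα hβ hind heven
end

section
/- Let (f,g) be a pair of real polynomials in two variables whose Jacobian determinant is nowhere vanishing, and suppose the polynomial map (f,g): ℝ² → ℝ² is not injective. Then for every (λ,μ) ≠ (0,0), the polynomial λf + μg has no critical points and has at least one disconnected level set. -/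
/-
Put h = λf + μg and k = -μf + λg. Then Jac(h, k) = (λ² + μ²) Jac(f, g) never vanishes, so h has
no critical points and, by the inverse function theorem, Φ = (h, k) is a local homeomorphism of ℝ²;
it is not injective because (f, g) is not. Call two points of a level set h⁻¹(t) joined when some
continuous lift through Φ of a segment {t} × [a, b] runs from one to the other. Lifts through a
local homeomorphism are unique, so they glue, and joinedness is an equivalence relation with open
classes. On a connected level set any two points x, y are therefore joined; if moreover
k x = k y, the segment is a single point and x = y. So Φ is injective on every connected level
set of h, and two distinct points with the same image under (f, g) lie on a disconnected one.
-/

open MvPolynomial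

open Set Filter Topology

namespace MvPolynomial

variable {𝕜 σ : Type*} [NontriviallyNormedField 𝕜] [Fintype σ]

noncomputable def evalFDeriv (h : MvPolynomial σ 𝕜) (p : σ → 𝕜) : (σ → 𝕜) →L[𝕜] 𝕜 :=
  ∑ i, eval p (pderiv i h) • ContinuousLinearMap.proj i

@[simp]
theorem evalFDeriv_apply (h : MvPolynomial σ 𝕜) (p v : σ → 𝕜) :
    evalFDeriv h p v = ∑ i, eval p (pderiv i h) * v i := by
  simp [evalFDeriv]

theorem hasStrictFDerivAt_eval (h : MvPolynomial σ 𝕜) (p : σ → 𝕜) :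
    HasStrictFDerivAt (fun q => eval q h) (evalFDeriv h p) p := by
  classical
  induction h using MvPolynomial.induction_on with
  | C a =>
    simp only [eval_C]
    refine (hasStrictFDerivAt_const a p).congr_fderiv ?_
    ext v
    simp
  | add f g hf hg =>
    simp only [map_add]
    refine (hf.fun_add hg).congr_fderiv ?_
    ext v
    simp [add_mul, Finset.sum_add_distrib]
  | mul_X f n hf =>
    simp only [map_mul, eval_X]
    refine (hf.fun_mul (ContinuousLinearMap.proj n).hasStrictFDerivAt).congr_fderiv ?_
    ext v
    simp [pderiv_X, Pi.single_apply, apply_ite (eval p), add_mul, Finset.sum_add_distrib,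
      Finset.mul_sum, mul_assoc]

end MvPolynomial

theorem isLocalHomeomorph_of_hasStrictFDerivAt {𝕜 E F : Type*} [NontriviallyNormedField 𝕜]
    [CompleteSpace 𝕜] [NormedAddCommGroup E] [NormedSpace 𝕜 E] [FiniteDimensional 𝕜 E]
    [NormedAddCommGroup F] [NormedSpace 𝕜 F] [FiniteDimensional 𝕜 F]
    (hdim : Module.finrank 𝕜 E = Module.finrank 𝕜 F) {f : E → F} {f' : E → E →L[𝕜] F}
    (hf : ∀ x, HasStrictFDerivAt f (f' x) x) (hinj : ∀ x, Function.Injective (f' x)) :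
    IsLocalHomeomorph f := by
  have := FiniteDimensional.complete 𝕜 E
  have := FiniteDimensional.complete 𝕜 F
  refine IsLocalHomeomorph.mk f fun x => ?_
  have hsurj := (LinearMap.injective_iff_surjective_of_finrank_eq_finrank hdim).1 (hinj x)
  let e := ContinuousLinearEquiv.ofBijective (f' x) (LinearMap.ker_eq_bot.2 (hinj x))
    (LinearMap.range_eq_top.2 hsurj)
  have hfe : HasStrictFDerivAt f (e : E →L[𝕜] F) x := by
    simpa only [e, ContinuousLinearEquiv.coe_ofBijective] using hf x
  exact ⟨hfe.toOpenPartialHomeomorph f, hfe.mem_toOpenPartialHomeomorph_source, fun _ _ => rfl⟩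

section LiftAlongFiber

variable {X Y : Type*} [TopologicalSpace X] {Φ : X → Y × ℝ} {t : Y}

def JoinedByLift (Φ : X → Y × ℝ) (t : Y) (x z : X) : Prop :=
  ∃ γ : ℝ → X, ContinuousOn γ (uIcc (Φ x).2 (Φ z).2) ∧
    (∀ u ∈ uIcc (Φ x).2 (Φ z).2, Φ (γ u) = (t, u)) ∧ γ (Φ x).2 = x ∧ γ (Φ z).2 = z

theorem JoinedByLift.symm {x z : X} (h : JoinedByLift Φ t x z) : JoinedByLift Φ t z x := by
  obtain ⟨γ, hγc, hγΦ, hγx, hγz⟩ := h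
  rw [uIcc_comm] at hγc hγΦ
  exact ⟨γ, hγc, hγΦ, hγz, hγx⟩

theorem JoinedByLift.trans [TopologicalSpace Y] [T2Space X] (hΦ : IsLocalHomeomorph Φ)
    {x y z : X} (hxy : JoinedByLift Φ t x y) (hyz : JoinedByLift Φ t y z) :
    JoinedByLift Φ t x z := by
  obtain ⟨σ, hσc, hσΦ, hσx, hσy⟩ := hxy
  obtain ⟨τ, hτc, hτΦ, hτy, hτz⟩ := hyz
  set a := (Φ x).2
  set b := (Φ y).2
  set c := (Φ z).2
  have hagree : EqOn σ τ (uIcc a b ∩ uIcc b c) :=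
    (T2Space.isSeparatedMap Φ).eqOn_of_comp_eqOn hΦ.isLocallyInjective
      (ordConnected_uIcc.inter ordConnected_uIcc).isPreconnected
      (hσc.mono inter_subset_left) (hτc.mono inter_subset_right)
      (fun u hu => (hσΦ u hu.1).trans (hτΦ u hu.2).symm)
      ⟨right_mem_uIcc, left_mem_uIcc⟩ (hσy.trans hτy.symm)
  classical
  let γ := (uIcc a b).piecewise σ τ
  have hγσ : EqOn γ σ (uIcc a b) := fun u hu => piecewise_eq_of_mem _ _ _ hu
  have hγτ : EqOn γ τ (uIcc b c) := fun u hu => by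
    by_cases h : u ∈ uIcc a b
    · exact (piecewise_eq_of_mem _ _ _ h).trans (hagree ⟨h, hu⟩)
    · exact piecewise_eq_of_notMem _ _ _ h
  refine ⟨γ, ((hσc.congr hγσ).union_of_isClosed (hτc.congr hγτ) isClosed_Icc
      isClosed_Icc).mono uIcc_subset_uIcc_union_uIcc, fun u hu => ?_,
    (hγσ left_mem_uIcc).trans hσx, (hγτ right_mem_uIcc).trans hτz⟩
  rcases uIcc_subset_uIcc_union_uIcc hu with h | h
  · rw [hγσ h, hσΦ u h]
  · rw [hγτ h, hτΦ u h]

theorem eventually_joinedByLift [TopologicalSpace Y] (hΦ : IsLocalHomeomorph Φ) {z : X}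
    (hz : (Φ z).1 = t) :
    ∀ᶠ w in 𝓝[{x | (Φ x).1 = t}] z, JoinedByLift Φ t z w := by
  subst hz
  obtain ⟨e, hze, rfl⟩ := hΦ z
  have hslice : {u : ℝ | ((e z).1, u) ∈ e.target} ∈ 𝓝 (e z).2 :=
    (e.open_target.preimage (by fun_prop)).mem_nhds (e.map_source hze)
  obtain ⟨l, r, hzlr, hlr⟩ := mem_nhds_iff_exists_Ioo_subset.1 hslice
  have hnhds : e.source ∩ (fun w => (e w).2) ⁻¹' Ioo l r ∈ 𝓝 z :=
    inter_mem (e.open_source.mem_nhds hze)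
      ((e.continuousAt hze).snd.preimage_mem_nhds (isOpen_Ioo.mem_nhds hzlr))
  filter_upwards [nhdsWithin_le_nhds hnhds, self_mem_nhdsWithin] with w ⟨hwe, hwlr⟩ hwt
  have hseg : uIcc (e z).2 (e w).2 ⊆ {u | ((e z).1, u) ∈ e.target} :=
    (ordConnected_Ioo.uIcc_subset hzlr hwlr).trans hlr
  refine ⟨fun u => e.symm ((e z).1, u),
    e.continuousOn_symm.comp (by fun_prop) fun u hu => hseg hu,
    fun u hu => e.right_inv (hseg hu), e.left_inv hze, ?_⟩
  change e.symm ((e z).1, (e w).2) = w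
  rw [← show (e w).1 = (e z).1 from hwt]
  exact e.left_inv hwe

theorem IsLocalHomeomorph.injOn_of_isPreconnected_fiber [TopologicalSpace Y] [T2Space X]
    (hΦ : IsLocalHomeomorph Φ) (hS : IsPreconnected {x | (Φ x).1 = t}) :
    InjOn Φ {x | (Φ x).1 = t} := by
  intro x hx y hy hxy
  obtain ⟨γ, -, -, hγx, hγy⟩ := hS.induction₂ (JoinedByLift Φ t)
    (fun _ hz => eventually_joinedByLift hΦ hz) (fun _ _ _ _ _ _ => JoinedByLift.trans hΦ)
    (fun _ _ _ _ => JoinedByLift.symm) hx hy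
  rw [← hxy] at hγy
  exact hγx.symm.trans hγy

end LiftAlongFiber

theorem Jac_C_mul_add_C_mul (f g : MvPolynomial (Fin 2) ℝ) (a b c d : ℝ) :
    Jac (C a * f + C b * g) (C c * f + C d * g) = C (a * d - b * c) * Jac f g := by
  simp only [Jac, map_add, pderiv_C_mul, map_sub, map_mul]
  ring

theorem eval_pderiv_ne_zero_of_eval_Jac_ne_zero {h k : MvPolynomial (Fin 2) ℝ} {p : Fin 2 → ℝ}
    (hp : eval p (Jac h k) ≠ 0) : eval p (pderiv 0 h) ≠ 0 ∨ eval p (pderiv 1 h) ≠ 0 := by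
  by_contra! h0
  simp [Jac, h0.1, h0.2] at hp

theorem injective_evalFDeriv_prod {h k : MvPolynomial (Fin 2) ℝ} {p : Fin 2 → ℝ}
    (hp : eval p (Jac h k) ≠ 0) :
    Function.Injective ((evalFDeriv h p).prod (evalFDeriv k p)) := by
  refine (injective_iff_map_eq_zero _).2 fun v hv => ?_
  simp only [ContinuousLinearMap.prod_apply, evalFDeriv_apply, Fin.sum_univ_two, Prod.mk_eq_zero]
    at hv
  obtain ⟨hh, hk⟩ := hv
  simp only [Jac, map_sub, map_mul] at hp
  have hv0 : v 0 = 0 := mul_left_cancel₀ hp <| by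
    linear_combination eval p (pderiv 1 k) * hh - eval p (pderiv 1 h) * hk
  have hv1 : v 1 = 0 := mul_left_cancel₀ hp <| by
    linear_combination eval p (pderiv 0 h) * hk - eval p (pderiv 0 k) * hh
  ext i
  fin_cases i <;> simp [hv0, hv1]

theorem isLocalHomeomorph_eval_prod {h k : MvPolynomial (Fin 2) ℝ}
    (hJ : ∀ p, eval p (Jac h k) ≠ 0) : IsLocalHomeomorph fun p => (eval p h, eval p k) :=
  isLocalHomeomorph_of_hasStrictFDerivAt (by simp)
    (fun p => (hasStrictFDerivAt_eval h p).prodMk (hasStrictFDerivAt_eval k p))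
    (fun p => injective_evalFDeriv_prod (hJ p))

theorem pencil_of_atypical_pair (f g : MvPolynomial (Fin 2) ℝ)
    (hJ : ∀ p : Fin 2 → ℝ, eval p (Jac f g) ≠ 0)
    (hni : ¬ Function.Injective (fun p : Fin 2 → ℝ => (eval p f, eval p g))) :
    ∀ lam mu : ℝ, (lam, mu) ≠ (0, 0) →
      (∀ p : Fin 2 → ℝ, eval p (pderiv 0 (C lam * f + C mu * g)) ≠ 0 ∨
                         eval p (pderiv 1 (C lam * f + C mu * g)) ≠ 0) ∧
      (∃ t : ℝ, {p : Fin 2 → ℝ | eval p (C lam * f + C mu * g) = t}.Nonempty ∧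
        ¬ IsPreconnected {p : Fin 2 → ℝ | eval p (C lam * f + C mu * g) = t}) := by
  intro lam mu hlm
  set h := C lam * f + C mu * g
  set k := C (-mu) * f + C lam * g
  have hJhk : ∀ p, eval p (Jac h k) ≠ 0 := fun p => by
    rw [Jac_C_mul_add_C_mul, eval_mul, eval_C]
    refine mul_ne_zero ?_ (hJ p)
    simpa [mul_self_add_mul_self_eq_zero] using hlm
  refine ⟨fun p => eval_pderiv_ne_zero_of_eval_Jac_ne_zero (hJhk p), ?_⟩
  by_contra! hconn
  refine hni fun x y hxy => ?_
  obtain ⟨hf, hg⟩ := Prod.mk.inj hxy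
  exact (isLocalHomeomorph_eval_prod hJhk).injOn_of_isPreconnected_fiber (hconn _ ⟨x, rfl⟩)
    rfl (by simp [h, hf, hg]) (by simp [h, k, hf, hg])
end
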